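/- arXiv:1406.4587 — 2 statements merged into one kernel-verified Lean document; each statement's English description precedes it below -/
import Mathlib

section
/- Let X be a nonempty compact ultrametric space and let C be any collection of balls of X whose union is X. Then there is a finite subcollection C' ⊆ C whose members are pairwise disjoint and whose union is X; that is, every cover of X by balls contains a finite subcover that is a partition of X. -/
/-! Any two balls of an ultrametric space are nested or disjoint. Compactness gives a finite
subcover, and its maximal members still cover the space and are pairwise disjoint. -/

/-- A ball in a metric space: an open metric ball of positive radius. -/
def IsBall {X : Type*} [MetricSpace X] (B : Set X) : Prop :=
  ∃ (c : X) (r : ℝ), 0 < r ∧ B = Metric.ball c r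

theorem Set.pairwise_disjoint_setOf_maximal {α : Type*} [PartialOrder α] [OrderBot α]
    {F : Set α} (hF : ∀ a ∈ F, ∀ b ∈ F, a ≤ b ∨ b ≤ a ∨ Disjoint a b) :
    {a | Maximal (· ∈ F) a}.Pairwise Disjoint := by
  intro a ha b hb hab
  rcases hF a ha.prop b hb.prop with hle | hle | hdisj
  · exact absurd (ha.eq_of_le hb.prop hle) hab
  · exact absurd (hb.eq_of_le ha.prop hle).symm hab
  · exact hdisj

theorem Set.Finite.sUnion_setOf_maximal {α : Type*} {F : Set (Set α)} (hF : F.Finite) :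
    ⋃₀ {A | Maximal (· ∈ F) A} = ⋃₀ F := by
  refine (Set.sUnion_mono fun A hA => hA.prop).antisymm ?_
  rintro x ⟨A, hA, hxA⟩
  obtain ⟨M, hAM, hM⟩ := hF.exists_le_maximal hA
  exact ⟨M, hM, hAM hxA⟩

theorem IsBall.isOpen {X : Type*} [MetricSpace X] {B : Set X} (hB : IsBall B) : IsOpen B := by
  obtain ⟨c, r, -, rfl⟩ := hB
  exact Metric.isOpen_ball

theorem IsBall.subset_or_subset_or_disjoint {X : Type*} [MetricSpace X] [IsUltrametricDist X]
    {A B : Set X} (hA : IsBall A) (hB : IsBall B) : A ⊆ B ∨ B ⊆ A ∨ Disjoint A B := by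
  obtain ⟨a, r, -, rfl⟩ := hA
  obtain ⟨b, s, -, rfl⟩ := hB
  exact IsUltrametricDist.ball_subset_trichotomy a b r s

theorem cover_by_balls_has_finite_partition_subcover_general
    {X : Type*} [MetricSpace X] [CompactSpace X]
    (hX : ∀ x y z : X, dist x y ≤ max (dist x z) (dist z y))
    (C : Set (Set X)) (hball : ∀ B ∈ C, IsBall B)
    (hcov : ⋃₀ C = Set.univ) :
    ∃ C' ⊆ C, C'.Finite ∧ C'.Pairwise (fun A A' => Disjoint A A') ∧
      ⋃₀ C' = Set.univ := by
  have : IsUltrametricDist X := ⟨fun x y z => hX x z y⟩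
  obtain ⟨F, hFC, hFfin, hFcov⟩ := isCompact_univ.elim_finite_subcover_image (c := id)
    (fun B hB => (hball B hB).isOpen) (by rw [← hcov, Set.sUnion_eq_biUnion]; rfl)
  refine ⟨{A | Maximal (· ∈ F) A}, fun A hA => hFC hA.prop,
    hFfin.subset fun A hA => hA.prop, ?_, ?_⟩
  · exact Set.pairwise_disjoint_setOf_maximal fun A hA B hB =>
      (hball A (hFC hA)).subset_or_subset_or_disjoint (hball B (hFC hB))
  · rw [hFfin.sUnion_setOf_maximal, Set.sUnion_eq_biUnion]
    exact Set.univ_subset_iff.mp hFcov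

/-- In a nonempty compact ultrametric space, every cover of the space by balls
contains a finite subcover that is a partition of the space. -/
theorem cover_by_balls_has_finite_partition_subcover
    {X : Type*} [MetricSpace X] [CompactSpace X] [Nonempty X]
    (hX : ∀ x y z : X, dist x y ≤ max (dist x z) (dist z y))
    (C : Set (Set X)) (hball : ∀ B ∈ C, IsBall B)
    (hcov : ⋃₀ C = Set.univ) :
    ∃ C' ⊆ C, C'.Finite ∧ C'.Pairwise (fun A A' => Disjoint A A') ∧
      ⋃₀ C' = Set.univ :=
  cover_by_balls_has_finite_partition_subcover_general hX C hball hcov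
end

section
/- Let X be a nonempty compact ultrametric space, let P be a partition of X into balls with at least two elements, and let B ∈ P be a ball whose depth is maximal among the depths of elements of P. Then B ≠ X, and if B̂ denotes the unique ball of X containing B as a maximal proper subball, then every maximal proper subball of B̂ belongs to P. -/
open Metric Set

/-- `B'` is a maximal proper subball of `B`: a ball properly contained in `B`
with no ball strictly between. -/
def IsMaxSubball {X : Type*} [MetricSpace X] (B' B : Set X) : Prop :=
  IsBall B' ∧ B' ⊂ B ∧ ∀ B'' : Set X, IsBall B'' → ¬(B' ⊂ B'' ∧ B'' ⊂ B)

/-- The depth of a ball `B`: the number of distinct balls of the space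
containing `B`. -/
noncomputable def ballDepth {X : Type*} [MetricSpace X] (B : Set X) : ℕ :=
  {A : Set X | IsBall A ∧ B ⊆ A}.ncard

section Aux

variable {X : Type*} [MetricSpace X]

lemma IsBall.nonempty {B : Set X} (h : IsBall B) : B.Nonempty := by
  obtain ⟨c, r, hr, rfl⟩ := h
  exact ⟨c, mem_ball_self hr⟩

lemma ultra_recenter (hX : ∀ x y z : X, dist x y ≤ max (dist x z) (dist z y))
    {c c' : X} {r : ℝ} (h : dist c' c < r) :
    Metric.ball c r = Metric.ball c' r := by
  ext y
  simp only [Metric.mem_ball]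
  constructor
  · intro hy
    calc dist y c' ≤ max (dist y c) (dist c c') := hX _ _ _
      _ < r := by rw [dist_comm c c']; exact max_lt hy h
  · intro hy
    calc dist y c ≤ max (dist y c') (dist c' c) := hX _ _ _
      _ < r := max_lt hy h

lemma IsBall.recenter (hX : ∀ x y z : X, dist x y ≤ max (dist x z) (dist z y))
    {E : Set X} (hE : IsBall E) {x : X} (hx : x ∈ E) :
    ∃ r : ℝ, 0 < r ∧ E = Metric.ball x r := by
  obtain ⟨c, r, hr, rfl⟩ := hE
  exact ⟨r, hr, ultra_recenter hX (Metric.mem_ball.mp hx)⟩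

lemma balls_nested (hX : ∀ x y z : X, dist x y ≤ max (dist x z) (dist z y))
    {E F : Set X} (hE : IsBall E) (hF : IsBall F) {x : X}
    (hxE : x ∈ E) (hxF : x ∈ F) : E ⊆ F ∨ F ⊆ E := by
  obtain ⟨r, hr, rfl⟩ := hE.recenter hX hxE
  obtain ⟨s, hs, rfl⟩ := hF.recenter hX hxF
  rcases le_total r s with h | h
  · exact Or.inl (Metric.ball_subset_ball h)
  · exact Or.inr (Metric.ball_subset_ball h)

/-- In a compact ultrametric space, there are finitely many balls containing a
fixed ball. -/
lemma finite_superballs [CompactSpace X]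
    (hX : ∀ x y z : X, dist x y ≤ max (dist x z) (dist z y))
    (c : X) {r : ℝ} (hr : 0 < r) :
    {A : Set X | IsBall A ∧ Metric.ball c r ⊆ A}.Finite := by
  -- the set of distances ≥ r from c is finite
  set T : Set ℝ := {t | r ≤ t ∧ ∃ y : X, dist c y = t} with hTdef
  have hT : T.Finite := by
    obtain ⟨s, hsfin, hscov⟩ :=
      (totallyBounded_iff.mp (isCompact_univ (X := X)).totallyBounded) r hr
    have hall : ∀ t : ℝ, ∃ y p : X, t ∈ T → y ∈ s ∧ dist c p = t ∧ p ∈ Metric.ball y r := by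
      intro t
      by_cases ht : t ∈ T
      · obtain ⟨_, p, hp⟩ := ht
        have : p ∈ ⋃ y ∈ s, Metric.ball y r := hscov (mem_univ p)
        obtain ⟨y, hy, hpy⟩ := mem_iUnion₂.mp this
        exact ⟨y, p, fun _ => ⟨hy, hp, hpy⟩⟩
      · exact ⟨c, c, fun h => absurd h ht⟩
    choose g p hg using hall
    apply Set.Finite.of_finite_image (f := g)
    · apply hsfin.subset
      rintro _ ⟨t, ht, rfl⟩
      exact (hg t ht).1
    · intro t ht t' ht' hgt
      by_contra hne
      -- the two witness points are r-separated but in the same r-ball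
      obtain ⟨hy, hp, hpy⟩ := hg t ht
      obtain ⟨hy', hp', hpy'⟩ := hg t' ht'
      rw [hgt] at hpy
      have hclose : dist (p t) (p t') < r := by
        calc dist (p t) (p t') ≤ max (dist (p t) (g t')) (dist (g t') (p t')) := hX _ _ _
          _ < r := max_lt (Metric.mem_ball.mp hpy) (by rw [dist_comm]; exact Metric.mem_ball.mp hpy')
      have key : ∀ a b : ℝ, a ∈ T → b ∈ T → a < b →
          dist c (p a) = a → dist c (p b) = b → dist (p a) (p b) < r → False := by
        intro a b ha hb hab hda hdb hd
        have : dist c (p b) ≤ max (dist c (p a)) (dist (p a) (p b)) := hX _ _ _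
        rw [hda, hdb] at this
        have : b ≤ dist (p a) (p b) := by
          rcases max_cases a (dist (p a) (p b)) with ⟨h1, _⟩ | ⟨h1, _⟩
          · linarith [this, h1]
          · linarith [this, h1]
        have : r ≤ dist (p a) (p b) := le_trans hb.1 this
        linarith
      rcases lt_trichotomy t t' with h | h | h
      · exact key t t' ht ht' h hp hp' hclose
      · exact hne h
      · exact key t' t ht' ht h hp' hp (by rw [dist_comm]; exact hclose)
  -- now inject superballs into subsets of T
  set φ : Set X → Set ℝ := fun A => {t | t ∈ T ∧ ∃ y ∈ A, dist c y = t} with hφdef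
  apply Set.Finite.of_finite_image (f := φ)
  · apply (hT.finite_subsets).subset
    rintro _ ⟨A, _, rfl⟩
    exact fun t ht => ht.1
  · rintro A ⟨hAball, hAsup⟩ A' ⟨hA'ball, hA'sup⟩ hφeq
    have hc : c ∈ Metric.ball c r := mem_ball_self hr
    obtain ⟨ρ, hρ, rfl⟩ := hAball.recenter hX (hAsup hc)
    obtain ⟨ρ', hρ', rfl⟩ := hA'ball.recenter hX (hA'sup hc)
    have main : ∀ ρ₁ ρ₂ : ℝ, 0 < ρ₁ → Metric.ball c r ⊆ Metric.ball c ρ₂ →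
        φ (Metric.ball c ρ₁) = φ (Metric.ball c ρ₂) →
        Metric.ball c ρ₁ ⊆ Metric.ball c ρ₂ := by
      intro ρ₁ ρ₂ _ hsup₂ heq y hy
      by_cases hyr : dist c y < r
      · exact hsup₂ (by rw [Metric.mem_ball, dist_comm]; exact hyr)
      · push_neg at hyr
        have ht : dist c y ∈ φ (Metric.ball c ρ₁) :=
          ⟨⟨hyr, y, rfl⟩, y, hy, rfl⟩
        rw [heq] at ht
        obtain ⟨_, y', hy', hdy'⟩ := ht
        rw [Metric.mem_ball, dist_comm, ← hdy']
        exact Metric.mem_ball'.mp hy'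
    exact Set.Subset.antisymm (main ρ ρ' hρ hA'sup hφeq) (main ρ' ρ hρ' hAsup hφeq.symm)

end Aux

section Depth

variable {X : Type*} [MetricSpace X] [CompactSpace X]

lemma IsBall.finite_superballs'
    (hX : ∀ x y z : X, dist x y ≤ max (dist x z) (dist z y))
    {D : Set X} (hD : IsBall D) : {A : Set X | IsBall A ∧ D ⊆ A}.Finite := by
  obtain ⟨c, r, hr, rfl⟩ := hD
  exact finite_superballs hX c hr

lemma depth_succ (hX : ∀ x y z : X, dist x y ≤ max (dist x z) (dist z y))
    {B' Bhat : Set X} (hBhat : IsBall Bhat) (h : IsMaxSubball B' Bhat) :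
    ballDepth B' = ballDepth Bhat + 1 := by
  obtain ⟨hB'ball, hsub, hmaxi⟩ := h
  obtain ⟨x, hx⟩ := hB'ball.nonempty
  have hset : {A : Set X | IsBall A ∧ B' ⊆ A}
      = insert B' {A : Set X | IsBall A ∧ Bhat ⊆ A} := by
    ext A
    simp only [Set.mem_insert_iff, Set.mem_setOf_eq]
    constructor
    · rintro ⟨hA, hBA⟩
      rcases balls_nested hX hA hBhat (hBA hx) (hsub.1 hx) with h1 | h1
      · by_cases hE : A = Bhat
        · exact Or.inr ⟨hA, hE ▸ subset_rfl⟩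
        · left
          by_contra hne
          exact hmaxi A hA ⟨ssubset_of_subset_of_ne hBA (Ne.symm hne),
            ssubset_of_subset_of_ne h1 hE⟩
      · exact Or.inr ⟨hA, h1⟩
    · rintro (rfl | ⟨hA, hBA⟩)
      · exact ⟨hB'ball, subset_rfl⟩
      · exact ⟨hA, (subset_of_ssubset hsub).trans hBA⟩
  have hfin : {A : Set X | IsBall A ∧ Bhat ⊆ A}.Finite := hBhat.finite_superballs' hX
  have hnm : B' ∉ {A : Set X | IsBall A ∧ Bhat ⊆ A} := fun hc => hsub.2 hc.2
  unfold ballDepth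
  rw [hset, Set.ncard_insert_of_notMem hnm hfin]

lemma depth_lt (hX : ∀ x y z : X, dist x y ≤ max (dist x z) (dist z y))
    {C A : Set X} (hC : IsBall C) (hA : IsBall A) (hCA : C ⊂ A) :
    ballDepth A < ballDepth C := by
  have hsub : insert C {D : Set X | IsBall D ∧ A ⊆ D} ⊆ {D : Set X | IsBall D ∧ C ⊆ D} := by
    rintro D (rfl | ⟨hD, hAD⟩)
    · exact ⟨hC, subset_rfl⟩
    · exact ⟨hD, hCA.1.trans hAD⟩
  have hfinC : {D : Set X | IsBall D ∧ C ⊆ D}.Finite := hC.finite_superballs' hX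
  have hfinA : {D : Set X | IsBall D ∧ A ⊆ D}.Finite := hA.finite_superballs' hX
  have hnm : C ∉ {D : Set X | IsBall D ∧ A ⊆ D} := fun hc => hCA.2 hc.2
  have : ballDepth A + 1 ≤ ballDepth C := by
    unfold ballDepth
    rw [← Set.ncard_insert_of_notMem hnm hfinA]
    exact Set.ncard_le_ncard hsub hfinC
  omega

end Depth

/-- If `P` is a partition of a nonempty compact ultrametric space into balls
with at least two members, and `B ∈ P` has maximal depth among members of `P`,
then `B ≠ X` and every maximal proper subball of the unique ball `B̂`
containing `B` as a maximal proper subball belongs to `P`. -/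
theorem maximal_depth_ball_siblings_in_partition
    {X : Type*} [MetricSpace X] [CompactSpace X] [Nonempty X]
    (hX : ∀ x y z : X, dist x y ≤ max (dist x z) (dist z y))
    (P : Set (Set X)) (hball : ∀ B ∈ P, IsBall B)
    (hdisj : P.Pairwise (fun A A' => Disjoint A A'))
    (hcov : ⋃₀ P = Set.univ)
    (htwo : ∃ B₁ ∈ P, ∃ B₂ ∈ P, B₁ ≠ B₂)
    (B : Set X) (hBP : B ∈ P)
    (hmax : ∀ B' ∈ P, ballDepth B' ≤ ballDepth B) :
    B ≠ Set.univ ∧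
      ∀ Bhat : Set X, IsBall Bhat → IsMaxSubball B Bhat →
        ∀ A : Set X, IsMaxSubball A Bhat → A ∈ P := by
  have hBball := hball B hBP
  have hBne : B.Nonempty := hBball.nonempty
  constructor
  · -- B ≠ univ
    obtain ⟨B₁, hB₁, B₂, hB₂, hne⟩ := htwo
    rintro rfl
    rcases eq_or_ne B₁ Set.univ with rfl | h1
    · have := hdisj hB₂ hB₁ (by exact fun h => hne h.symm)
      obtain ⟨y, hy⟩ := (hball B₂ hB₂).nonempty
      exact (this.ne_of_mem hy (Set.mem_univ y)) rfl
    · have := hdisj hB₁ hBP h1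
      obtain ⟨y, hy⟩ := (hball B₁ hB₁).nonempty
      exact (this.ne_of_mem hy (Set.mem_univ y)) rfl
  · intro Bhat hBhatBall hBmax A hAmax
    obtain ⟨hAball, hAsub, hAmaxi⟩ := hAmax
    obtain ⟨x, hx⟩ := hAball.nonempty
    have hxuniv : x ∈ ⋃₀ P := hcov ▸ Set.mem_univ x
    obtain ⟨C, hCP, hxC⟩ := hxuniv
    have hCball := hball C hCP
    -- it suffices to show A = C
    suffices hAC : A = C by rw [hAC]; exact hCP
    -- B ⊆ C leads to a contradiction
    have hBC : ¬ Bhat ⊆ C := by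
      intro hsub
      have hBsubC : B ⊆ C := (subset_of_ssubset hBmax.2.1).trans hsub
      have hBneC : B ≠ C := by
        rintro rfl
        exact hBmax.2.1.2 hsub
      obtain ⟨y, hy⟩ := hBne
      exact (hdisj hBP hCP hBneC).ne_of_mem hy (hBsubC hy) rfl
    rcases balls_nested hX hAball hCball hx hxC with h1 | h1
    · -- A ⊆ C
      rcases eq_or_ne A C with h | h
      · exact h
      · exfalso
        have hAC : A ⊂ C := ssubset_of_subset_of_ne h1 h
        rcases balls_nested hX hCball hBhatBall hxC (hAsub.1 hx) with h2 | h2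
        · -- C ⊆ Bhat : then C = Bhat by maximality of A, contradiction with hBC
          rcases eq_or_ne C Bhat with rfl | hne
          · exact hBC subset_rfl
          · exact hAmaxi C hCball ⟨hAC, ssubset_of_subset_of_ne h2 hne⟩
        · exact hBC h2
    · -- C ⊆ A
      rcases eq_or_ne C A with h | h
      · exact h.symm
      · exfalso
        have hCA : C ⊂ A := ssubset_of_subset_of_ne h1 h
        have h1' : ballDepth A < ballDepth C := depth_lt hX hCball hAball hCA
        have h2' : ballDepth B = ballDepth Bhat + 1 := depth_succ hX hBhatBall hBmax
        have h3' : ballDepth A = ballDepth Bhat + 1 :=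
          depth_succ hX hBhatBall ⟨hAball, hAsub, hAmaxi⟩
        have := hmax C hCP
        omega
end
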